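/- arXiv:2208.14014 — 2 statements merged into one kernel-verified Lean document; each statement's English description precedes it below -/
import Mathlib

section
/- Let q ∈ (0, 1/2). Suppose F : ℝ → ℝ is globally q-Lipschitz with F(0) = 0, and g : ℝ → ℝ is continuous, nondecreasing, with g(0) = 0, and satisfies α₁|s| ≤ |g(s)| ≤ α₂|s| for all s ∈ ℝ, where 0 < α₁ ≤ α₂ and α₁/(1 + α₂²) > q. Let μ > 0 be the exponential decay rate of the energy for this system. Then there exists a constant M' > 0 such that every classical solution u satisfies, for all t ≥ 0: inf over c ∈ ℝ of [∫₀^L |u(x,t) − c|² dx + |u(0,t) − c|² + ∫₀^L |∂ₓu(x,t)|² dx + ∫₀^L |∂ₜu(x,t)|² dx + |∂ₜu(0,t)|²] ≤ M'·exp(−μt)·E^u(0); that is, the squared energy-space distance from the state to the set of stationary (constant) states decays exponentially. -/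
open MeasureTheory Set

/-- Spatial partial derivative `∂ₓu`. -/
noncomputable def uX (u : ℝ → ℝ → ℝ) (x t : ℝ) : ℝ := deriv (fun y => u y t) x

/-- Time partial derivative `∂ₜu`. -/
noncomputable def uT (u : ℝ → ℝ → ℝ) (x t : ℝ) : ℝ := deriv (fun s => u x s) t

/-- Second time partial derivative `∂ₜₜu`. -/
noncomputable def uTT (u : ℝ → ℝ → ℝ) (x t : ℝ) : ℝ := deriv (fun s => uT u x s) t

/-- Second spatial partial derivative `∂ₓₓu`. -/
noncomputable def uXX (u : ℝ → ℝ → ℝ) (x t : ℝ) : ℝ := deriv (fun y => uX u y t) x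

/-- A classical solution of the boundary control system: `u` is C² on `[0,L] × [0,∞)`,
satisfies the wave equation on `(0,L) × (0,∞)`, the dynamic boundary condition at `x = 0`
and the Neumann feedback condition at `x = L`. -/
def IsClassicalSolution (L : ℝ) (F g : ℝ → ℝ) (u : ℝ → ℝ → ℝ) : Prop :=
  ContDiffOn ℝ 2 (fun p : ℝ × ℝ => u p.1 p.2) (Icc 0 L ×ˢ Ici 0) ∧
  (∀ x ∈ Ioo 0 L, ∀ t : ℝ, 0 < t → uTT u x t = uXX u x t) ∧
  (∀ t : ℝ, 0 ≤ t → uTT u 0 t - uX u 0 t = F (uT u 0 t)) ∧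
  (∀ t : ℝ, 0 ≤ t → uX u L t = - g (uT u L t))

/-- The mechanical energy of a classical solution. -/
noncomputable def energy (L : ℝ) (u : ℝ → ℝ → ℝ) (t : ℝ) : ℝ :=
  (1/2) * (∫ x in (0:ℝ)..L, ((uX u x t)^2 + (uT u x t)^2)) + (1/2) * (uT u 0 t)^2

/-
At a state `u(·, t)` choose the constant `c = u(0, t)`. By the fundamental theorem of calculus and
Cauchy–Schwarz, `∫₀^L |u(x,t) - u(0,t)|² dx ≤ L² ∫₀^L |∂ₓu(x,t)|² dx`, so the squared distance to
the stationary states is at most `2(L² + 1)` times the energy at time `t`, and the assumed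
exponential decay of the energy finishes the proof. At `t = 0` only the one-sided time derivative
is controlled, so the bound there is obtained by letting `t → 0⁺`.
-/

open Filter Topology

/-- The derivative of `u` within the closed half-strip `[0,L] × [0,∞)`. Unlike `uT`, which is a
two-sided derivative and hence junk at `t = 0`, it gives the one-sided time derivative there. -/
noncomputable def stripDeriv (L : ℝ) (u : ℝ → ℝ → ℝ) (p : ℝ × ℝ) : ℝ × ℝ →L[ℝ] ℝ :=
  fderivWithin ℝ (fun p : ℝ × ℝ => u p.1 p.2) (Icc 0 L ×ˢ Ici 0) p

noncomputable def stripEnergy (L : ℝ) (u : ℝ → ℝ → ℝ) (t : ℝ) : ℝ :=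
  (1/2) * ((∫ x in (0:ℝ)..L, (stripDeriv L u (x, t) (1, 0))^2)
    + ∫ x in (0:ℝ)..L, (stripDeriv L u (x, t) (0, 1))^2) + (1/2) * (stripDeriv L u (0, t) (0, 1))^2

theorem sq_intervalIntegral_le {f : ℝ → ℝ} {a b : ℝ} (hab : a ≤ b)
    (hf : IntervalIntegrable f volume a b)
    (hf2 : IntervalIntegrable (fun x => f x ^ 2) volume a b) :
    (∫ x in a..b, f x)^2 ≤ (b - a) * ∫ x in a..b, f x ^ 2 := by
  set S := ∫ x in a..b, f x
  set Q := ∫ x in a..b, f x ^ 2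
  have hnonneg : 0 ≤ ∫ x in a..b, ((b - a) * f x - S)^2 :=
    intervalIntegral.integral_nonneg hab fun _ _ => sq_nonneg _
  have hexpand : (∫ x in a..b, ((b - a) * f x - S)^2) = (b - a) * ((b - a) * Q - S^2) := by
    have hpt : ∀ x, ((b - a) * f x - S)^2 = (b - a)^2 * f x ^ 2 - (2 * (b - a) * S) * f x + S^2 :=
      fun x => by ring
    simp only [hpt]
    rw [intervalIntegral.integral_add ((hf2.const_mul _).sub (hf.const_mul _))
        intervalIntegrable_const, intervalIntegral.integral_sub (hf2.const_mul _) (hf.const_mul _),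
      intervalIntegral.integral_const_mul, intervalIntegral.integral_const_mul,
      intervalIntegral.integral_const, smul_eq_mul]
    ring
  rcases hab.eq_or_lt with rfl | hlt
  · simp [S]
  · rw [hexpand] at hnonneg
    nlinarith [nonneg_of_mul_nonneg_right hnonneg (sub_pos.2 hlt)]

theorem integral_sq_sub_le_of_hasDerivAt {f f' : ℝ → ℝ} {L : ℝ} (hL : 0 ≤ L)
    (hf : ContinuousOn f (Icc 0 L)) (hderiv : ∀ x ∈ Ioo 0 L, HasDerivAt f (f' x) x)
    (hf' : ContinuousOn f' (Icc 0 L)) :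
    ∫ x in (0:ℝ)..L, (f x - f 0)^2 ≤ L^2 * ∫ x in (0:ℝ)..L, f' x ^ 2 := by
  set J := ∫ x in (0:ℝ)..L, f' x ^ 2
  have hpoint : ∀ x ∈ Icc 0 L, (f x - f 0)^2 ≤ L * J := by
    intro x hx
    have hsub : uIcc 0 x ⊆ Icc 0 L := by rw [uIcc_of_le hx.1]; exact Icc_subset_Icc le_rfl hx.2
    have hftc : f x - f 0 = ∫ y in (0:ℝ)..x, f' y :=
      (intervalIntegral.integral_eq_sub_of_hasDerivAt_of_le hx.1
        (hf.mono (Icc_subset_Icc le_rfl hx.2))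
        (fun y hy => hderiv y ⟨hy.1, hy.2.trans_le hx.2⟩)
        ((hf'.mono hsub).intervalIntegrable)).symm
    calc (f x - f 0)^2 ≤ (x - 0) * ∫ y in (0:ℝ)..x, f' y ^ 2 := by
          rw [hftc]
          exact sq_intervalIntegral_le hx.1 ((hf'.mono hsub).intervalIntegrable)
            (((hf'.pow 2).mono hsub).intervalIntegrable)
      _ ≤ L * J := by
          rw [sub_zero]
          exact mul_le_mul hx.2 (intervalIntegral.integral_mono_interval le_rfl hx.1 hx.2
              (ae_of_all _ fun _ => sq_nonneg _)
              ((hf'.pow 2).mono (uIcc_of_le hL).subset).intervalIntegrable)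
            (intervalIntegral.integral_nonneg hx.1 fun _ _ => sq_nonneg _) hL
  calc ∫ x in (0:ℝ)..L, (f x - f 0)^2 ≤ ∫ _ in (0:ℝ)..L, L * J :=
        intervalIntegral.integral_mono_on hL
          ((((hf.sub continuousOn_const).pow 2).mono (uIcc_of_le hL).subset).intervalIntegrable)
          intervalIntegrable_const hpoint
    _ = L^2 * J := by rw [intervalIntegral.integral_const, smul_eq_mul]; ring

section HalfStrip

variable {L : ℝ} {u : ℝ → ℝ → ℝ}

theorem hasDerivWithinAt_stripDeriv_fst
    (hu : DifferentiableOn ℝ (fun p : ℝ × ℝ => u p.1 p.2) (Icc 0 L ×ˢ Ici 0))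
    {x t : ℝ} (hx : x ∈ Icc 0 L) (ht : 0 ≤ t) :
    HasDerivWithinAt (fun y => u y t) (stripDeriv L u (x, t) (1, 0)) (Icc 0 L) x := by
  have hline : HasDerivWithinAt (fun y : ℝ => (y, t)) ((1 : ℝ), (0 : ℝ)) (Icc 0 L) x :=
    ((hasDerivAt_id x).prodMk (hasDerivAt_const x t)).hasDerivWithinAt
  exact (hu (x, t) ⟨hx, ht⟩).hasFDerivWithinAt.comp_hasDerivWithinAt x hline
    fun _ hy => mk_mem_prod hy ht

theorem hasDerivWithinAt_stripDeriv_snd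
    (hu : DifferentiableOn ℝ (fun p : ℝ × ℝ => u p.1 p.2) (Icc 0 L ×ˢ Ici 0))
    {x t : ℝ} (hx : x ∈ Icc 0 L) (ht : 0 ≤ t) :
    HasDerivWithinAt (fun s => u x s) (stripDeriv L u (x, t) (0, 1)) (Ici 0) t := by
  have hline : HasDerivWithinAt (fun s : ℝ => (x, s)) ((0 : ℝ), (1 : ℝ)) (Ici 0) t :=
    ((hasDerivAt_const t x).prodMk (hasDerivAt_id t)).hasDerivWithinAt
  exact (hu (x, t) ⟨hx, ht⟩).hasFDerivWithinAt.comp_hasDerivWithinAt t hline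
    fun _ hs => mk_mem_prod hx hs

theorem uX_eq_stripDeriv
    (hu : DifferentiableOn ℝ (fun p : ℝ × ℝ => u p.1 p.2) (Icc 0 L ×ˢ Ici 0))
    {x t : ℝ} (hx : x ∈ Ioo 0 L) (ht : 0 ≤ t) :
    uX u x t = stripDeriv L u (x, t) (1, 0) :=
  ((hasDerivWithinAt_stripDeriv_fst hu (Ioo_subset_Icc_self hx) ht).hasDerivAt
    (Icc_mem_nhds hx.1 hx.2)).deriv

theorem uT_eq_stripDeriv
    (hu : DifferentiableOn ℝ (fun p : ℝ × ℝ => u p.1 p.2) (Icc 0 L ×ˢ Ici 0))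
    {x t : ℝ} (hx : x ∈ Icc 0 L) (ht : 0 < t) :
    uT u x t = stripDeriv L u (x, t) (0, 1) :=
  ((hasDerivWithinAt_stripDeriv_snd hu hx ht.le).hasDerivAt (Ici_mem_nhds ht)).deriv

theorem sq_uT_le_sq_stripDeriv
    (hu : DifferentiableOn ℝ (fun p : ℝ × ℝ => u p.1 p.2) (Icc 0 L ×ˢ Ici 0))
    {x t : ℝ} (hx : x ∈ Icc 0 L) (ht : 0 ≤ t) :
    (uT u x t)^2 ≤ (stripDeriv L u (x, t) (0, 1))^2 := by
  by_cases hd : DifferentiableAt ℝ (fun s => u x s) t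
  · have hunique : UniqueDiffWithinAt ℝ (Ici (0:ℝ)) t := uniqueDiffOn_Ici 0 t ht
    rw [uT, ← hd.hasDerivAt.hasDerivWithinAt.derivWithin hunique,
      (hasDerivWithinAt_stripDeriv_snd hu hx ht).derivWithin hunique]
  · rw [uT, deriv_zero_of_not_differentiableAt hd, sq, zero_mul]
    exact sq_nonneg _

theorem continuousOn_stripDeriv (hL : 0 < L)
    (hu : ContDiffOn ℝ 1 (fun p : ℝ × ℝ => u p.1 p.2) (Icc 0 L ×ˢ Ici 0)) :
    ContinuousOn (stripDeriv L u) (Icc 0 L ×ˢ Ici 0) :=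
  hu.continuousOn_fderivWithin ((uniqueDiffOn_Icc hL).prod (uniqueDiffOn_Ici 0)) le_rfl

theorem continuousOn_stripDeriv_slice (hL : 0 < L)
    (hu : ContDiffOn ℝ 1 (fun p : ℝ × ℝ => u p.1 p.2) (Icc 0 L ×ˢ Ici 0))
    {t : ℝ} (ht : 0 ≤ t) (e : ℝ × ℝ) :
    ContinuousOn (fun x => stripDeriv L u (x, t) e) (Icc 0 L) :=
  ((continuousOn_stripDeriv hL hu).comp (continuousOn_id.prodMk continuousOn_const)
    fun _ hy => ⟨hy, ht⟩).clm_apply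
    continuousOn_const

theorem integral_sq_sub_le_stripDeriv (hL : 0 < L)
    (hu : ContDiffOn ℝ 1 (fun p : ℝ × ℝ => u p.1 p.2) (Icc 0 L ×ˢ Ici 0))
    {t : ℝ} (ht : 0 ≤ t) :
    ∫ x in (0:ℝ)..L, (u x t - u 0 t)^2 ≤ L^2 * ∫ x in (0:ℝ)..L, (stripDeriv L u (x, t) (1, 0))^2 :=
  integral_sq_sub_le_of_hasDerivAt hL.le
    (hu.continuousOn.comp (continuousOn_id.prodMk continuousOn_const) fun _ hy => ⟨hy, ht⟩)
    (fun _ hx => (hasDerivWithinAt_stripDeriv_fst (hu.differentiableOn one_ne_zero)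
      (Ioo_subset_Icc_self hx) ht).hasDerivAt (Icc_mem_nhds hx.1 hx.2))
    (continuousOn_stripDeriv_slice hL hu ht _)

theorem intervalIntegrable_sq_stripDeriv (hL : 0 < L)
    (hu : ContDiffOn ℝ 1 (fun p : ℝ × ℝ => u p.1 p.2) (Icc 0 L ×ˢ Ici 0))
    {t : ℝ} (ht : 0 ≤ t) (e : ℝ × ℝ) :
    IntervalIntegrable (fun x => (stripDeriv L u (x, t) e)^2) volume 0 L :=
  (((continuousOn_stripDeriv_slice hL hu ht e).pow 2).mono
    (uIcc_of_le hL.le).subset).intervalIntegrable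

theorem integral_sq_uX_eq (hL : 0 < L)
    (hu : DifferentiableOn ℝ (fun p : ℝ × ℝ => u p.1 p.2) (Icc 0 L ×ˢ Ici 0))
    {t : ℝ} (ht : 0 ≤ t) :
    ∫ x in (0:ℝ)..L, (uX u x t)^2 = ∫ x in (0:ℝ)..L, (stripDeriv L u (x, t) (1, 0))^2 :=
  intervalIntegral.integral_congr_Ioo_of_le hL.le fun _ hx => by rw [uX_eq_stripDeriv hu hx ht]

theorem integral_sq_uT_le (hL : 0 < L)
    (hu : ContDiffOn ℝ 1 (fun p : ℝ × ℝ => u p.1 p.2) (Icc 0 L ×ˢ Ici 0))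
    {t : ℝ} (ht : 0 ≤ t) :
    ∫ x in (0:ℝ)..L, (uT u x t)^2 ≤ ∫ x in (0:ℝ)..L, (stripDeriv L u (x, t) (0, 1))^2 := by
  by_cases hint : IntervalIntegrable (fun x => (uT u x t)^2) volume 0 L
  · exact intervalIntegral.integral_mono_on hL.le hint
      (intervalIntegrable_sq_stripDeriv hL hu ht _)
      fun x hx => sq_uT_le_sq_stripDeriv (hu.differentiableOn one_ne_zero) hx ht
  · rw [intervalIntegral.integral_undef hint]
    exact intervalIntegral.integral_nonneg hL.le fun _ _ => sq_nonneg _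

theorem energy_eq_stripEnergy (hL : 0 < L)
    (hu : ContDiffOn ℝ 1 (fun p : ℝ × ℝ => u p.1 p.2) (Icc 0 L ×ˢ Ici 0))
    {t : ℝ} (ht : 0 < t) :
    energy L u t = stripEnergy L u t := by
  have hdiff := hu.differentiableOn one_ne_zero
  have hintegrand : ∫ x in (0:ℝ)..L, ((uX u x t)^2 + (uT u x t)^2)
      = ∫ x in (0:ℝ)..L, ((stripDeriv L u (x, t) (1, 0))^2 + (stripDeriv L u (x, t) (0, 1))^2) :=
    intervalIntegral.integral_congr_Ioo_of_le hL.le fun _ hx => by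
      rw [uX_eq_stripDeriv hdiff hx ht.le, uT_eq_stripDeriv hdiff (Ioo_subset_Icc_self hx) ht]
  rw [energy, stripEnergy, hintegrand, intervalIntegral.integral_add
      (intervalIntegrable_sq_stripDeriv hL hu ht.le _)
      (intervalIntegrable_sq_stripDeriv hL hu ht.le _),
    uT_eq_stripDeriv hdiff ⟨le_rfl, hL.le⟩ ht]

theorem continuousOn_integral_sq_stripDeriv (hL : 0 < L)
    (hu : ContDiffOn ℝ 1 (fun p : ℝ × ℝ => u p.1 p.2) (Icc 0 L ×ˢ Ici 0)) (e : ℝ × ℝ) :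
    ContinuousOn (fun t => ∫ x in (0:ℝ)..L, (stripDeriv L u (x, t) e)^2) (Ici 0) := by
  -- Continuity of parametric integrals is available for globally continuous integrands, so
  -- extend `stripDeriv` to the plane by projecting onto the half-strip.
  set extension : ℝ × ℝ → ℝ × ℝ →L[ℝ] ℝ :=
    fun p => stripDeriv L u ((projIcc 0 L hL.le p.1 : ℝ), max p.2 0)
  have hext : Continuous extension :=
    (continuousOn_stripDeriv hL hu).comp_continuous (by fun_prop)
      fun p => mk_mem_prod (projIcc 0 L hL.le p.1).2 (le_max_right p.2 0)
  refine (intervalIntegral.continuous_parametric_intervalIntegral_of_continuous' (μ := volume)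
    (f := fun t x => (extension (x, t) e)^2) (by fun_prop) 0 L).continuousOn.congr fun t ht => ?_
  refine intervalIntegral.integral_congr fun x hx => ?_
  rw [uIcc_of_le hL.le] at hx
  simp only [extension, projIcc_of_mem hL.le hx, max_eq_left (mem_Ici.1 ht)]

theorem continuousOn_stripEnergy (hL : 0 < L)
    (hu : ContDiffOn ℝ 1 (fun p : ℝ × ℝ => u p.1 p.2) (Icc 0 L ×ˢ Ici 0)) :
    ContinuousOn (stripEnergy L u) (Ici 0) := by
  have hboundary : ContinuousOn (fun t => stripDeriv L u (0, t) (0, 1)) (Ici 0) :=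
    ((continuousOn_stripDeriv hL hu).comp (continuousOn_const.prodMk continuousOn_id)
      fun _ ht => ⟨⟨le_rfl, hL.le⟩, ht⟩).clm_apply continuousOn_const
  unfold stripEnergy
  exact (continuousOn_const.mul ((continuousOn_integral_sq_stripDeriv hL hu _).add
    (continuousOn_integral_sq_stripDeriv hL hu _))).add (continuousOn_const.mul (hboundary.pow 2))

theorem stripEnergy_le_of_energy_le (hL : 0 < L)
    (hu : ContDiffOn ℝ 1 (fun p : ℝ × ℝ => u p.1 p.2) (Icc 0 L ×ˢ Ici 0))
    {B : ℝ → ℝ} (hB : Continuous B) (hbound : ∀ t, 0 < t → energy L u t ≤ B t)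
    {t : ℝ} (ht : 0 ≤ t) :
    stripEnergy L u t ≤ B t := by
  have hright : ContinuousWithinAt (stripEnergy L u) (Ioi t) t :=
    ((continuousOn_stripEnergy hL hu) t ht).mono fun _ hs => ht.trans (le_of_lt hs)
  refine le_of_tendsto_of_tendsto hright.tendsto hB.continuousWithinAt.tendsto
    (eventually_nhdsWithin_of_forall fun s hs => ?_)
  have hs : 0 < s := ht.trans_lt hs
  exact (energy_eq_stripEnergy hL hu hs).symm.le.trans (hbound s hs)

theorem iInf_sq_dist_stationary_le (hL : 0 < L)
    (hu : ContDiffOn ℝ 1 (fun p : ℝ × ℝ => u p.1 p.2) (Icc 0 L ×ˢ Ici 0))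
    {t : ℝ} (ht : 0 ≤ t) :
    (⨅ c : ℝ, ((∫ x in (0:ℝ)..L, (u x t - c)^2) + (u 0 t - c)^2
        + (∫ x in (0:ℝ)..L, (uX u x t)^2)
        + (∫ x in (0:ℝ)..L, (uT u x t)^2) + (uT u 0 t)^2))
      ≤ 2 * (L^2 + 1) * stripEnergy L u t := by
  have hnonneg : ∀ f : ℝ → ℝ, 0 ≤ ∫ x in (0:ℝ)..L, (f x)^2 :=
    fun _ => intervalIntegral.integral_nonneg hL.le fun _ _ => sq_nonneg _
  refine ciInf_le_of_le ⟨0, ?_⟩ (u 0 t) ?_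
  · rintro _ ⟨c, rfl⟩
    exact add_nonneg (add_nonneg (add_nonneg (add_nonneg (hnonneg _) (sq_nonneg _)) (hnonneg _))
      (hnonneg _)) (sq_nonneg _)
  · have hpoincare := integral_sq_sub_le_stripDeriv hL hu ht
    have hspace := integral_sq_uX_eq hL (hu.differentiableOn one_ne_zero) ht
    have htime := integral_sq_uT_le hL hu ht
    have hboundary := sq_uT_le_sq_stripDeriv (hu.differentiableOn one_ne_zero) ⟨le_rfl, hL.le⟩ ht
    have hspace_nonneg := hnonneg fun x => stripDeriv L u (x, t) (1, 0)
    have htime_nonneg := hnonneg fun x => stripDeriv L u (x, t) (0, 1)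
    rw [stripEnergy, sub_self, sq, zero_mul]
    nlinarith [sq_nonneg L]

end HalfStrip

theorem attractivity_anti_damping_general
    (L : ℝ) (hL : 0 < L)
    (F g : ℝ → ℝ)
    (M μ : ℝ) (hM : 0 < M)
    (hdecay : ∀ u : ℝ → ℝ → ℝ, IsClassicalSolution L F g u → ∀ t : ℝ, 0 ≤ t →
      energy L u t ≤ M * Real.exp (-μ * t) * energy L u 0) :
    ∃ M' : ℝ, 0 < M' ∧
      ∀ u : ℝ → ℝ → ℝ, IsClassicalSolution L F g u → ∀ t : ℝ, 0 ≤ t →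
        (⨅ c : ℝ, ((∫ x in (0:ℝ)..L, (u x t - c)^2) + (u 0 t - c)^2
            + (∫ x in (0:ℝ)..L, (uX u x t)^2)
            + (∫ x in (0:ℝ)..L, (uT u x t)^2) + (uT u 0 t)^2))
          ≤ M' * Real.exp (-μ * t) * energy L u 0 := by
  refine ⟨2 * (L^2 + 1) * M, by positivity, fun u hsol t ht => ?_⟩
  have hu : ContDiffOn ℝ 1 (fun p : ℝ × ℝ => u p.1 p.2) (Icc 0 L ×ˢ Ici 0) :=
    hsol.1.of_le (by norm_num)
  have hstrip : stripEnergy L u t ≤ M * Real.exp (-μ * t) * energy L u 0 :=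
    stripEnergy_le_of_energy_le hL hu (by fun_prop) (fun s hs => hdecay u hsol s hs.le) ht
  calc _ ≤ 2 * (L^2 + 1) * stripEnergy L u t := iInf_sq_dist_stationary_le hL hu ht
    _ ≤ 2 * (L^2 + 1) * (M * Real.exp (-μ * t) * energy L u 0) := by gcongr
    _ = 2 * (L^2 + 1) * M * Real.exp (-μ * t) * energy L u 0 := by ring

/-- **Uniform attractivity of the set of stationary states in the anti-damping case.**
Under the hypotheses of the anti-damping stability theorem, with `μ > 0` the exponential decay
rate of the energy, the squared energy-space distance from the state to the set of stationary
(constant) states decays exponentially. -/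
theorem attractivity_anti_damping
    (L q α₁ α₂ : ℝ) (hL : 0 < L) (hq : 0 < q) (hq2 : q < 1/2)
    (hα₁ : 0 < α₁) (hα₁₂ : α₁ ≤ α₂) (hqα : q < α₁ / (1 + α₂^2))
    (F g : ℝ → ℝ)
    (hFlip : ∀ a b : ℝ, |F a - F b| ≤ q * |a - b|) (hF0 : F 0 = 0)
    (hgc : Continuous g) (hgm : Monotone g) (hg0 : g 0 = 0)
    (hsector : ∀ s : ℝ, α₁ * |s| ≤ |g s| ∧ |g s| ≤ α₂ * |s|)
    (M μ : ℝ) (hM : 0 < M) (hμ : 0 < μ)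
    (hdecay : ∀ u : ℝ → ℝ → ℝ, IsClassicalSolution L F g u → ∀ t : ℝ, 0 ≤ t →
      energy L u t ≤ M * Real.exp (-μ * t) * energy L u 0) :
    ∃ M' : ℝ, 0 < M' ∧
      ∀ u : ℝ → ℝ → ℝ, IsClassicalSolution L F g u → ∀ t : ℝ, 0 ≤ t →
        (⨅ c : ℝ, ((∫ x in (0:ℝ)..L, (u x t - c)^2) + (u 0 t - c)^2
            + (∫ x in (0:ℝ)..L, (uX u x t)^2)
            + (∫ x in (0:ℝ)..L, (uT u x t)^2) + (uT u 0 t)^2))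
          ≤ M' * Real.exp (-μ * t) * energy L u 0 :=
  attractivity_anti_damping_general L hL F g M μ hM hdecay
end

section
/- Let 𝓗 be a real Hilbert space, K a closed subspace of 𝓗, and E : 𝓗 → [0, ∞) a continuous function such that: (i) E(cX) = c²·E(X) for all c ≥ 0 and X ∈ 𝓗; (ii) there exists M₁ > 0 with M₁·‖X‖² ≤ E(X) for all X ∈ K; (iii) E(X + Y) = E(X) whenever X ∈ 𝓗 and Y belongs to the orthogonal complement of K. Then for every E₀ ≥ 0 the sublevel set B = {Z ∈ 𝓗 : E(Z) ≤ E₀} is nonempty, and for every X ∈ 𝓗 one has dist(X, B)² ≤ M₁⁻¹·max(E(X) − E₀, 0), where dist(X, B) = inf over Z ∈ B of ‖X − Z‖. -/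
/-!
Write `X = P + Q` with `P` the orthogonal projection of `X` onto `K` and `Q ∈ Kᗮ`, so that
`E X = E P ≥ M₁ ‖P‖²`. If `E X > E₀`, shrinking only the `K`-component gives the point
`Z = t P + Q` with `t = √(E₀ / E X)`, which satisfies `E Z = t² E X = E₀`, and
`‖X - Z‖² = (1 - t)² ‖P‖² ≤ (1 - t²) E X / M₁ = (E X - E₀) / M₁`.
-/

open Metric

lemma sq_one_sub_sqrt_div_mul_le {a b : ℝ} (ha : 0 ≤ a) (hab : a ≤ b) :
    (1 - √(a / b)) ^ 2 * b ≤ b - a := by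
  set t := √(a / b)
  have ht0 : 0 ≤ t := Real.sqrt_nonneg _
  have ht1 : t ≤ 1 := Real.sqrt_le_one.mpr (div_le_one_of_le₀ hab (ha.trans hab))
  have hsq : t ^ 2 * b = a :=
    (Real.sq_sqrt (div_nonneg ha (ha.trans hab))).symm ▸
      div_mul_cancel_of_imp fun hb => by linarith
  -- `(1 - t)² ≤ 1 - t²` for `0 ≤ t ≤ 1`
  nlinarith [mul_le_mul_of_nonneg_right (mul_le_mul_of_nonneg_left ht1 ht0) (ha.trans hab)]

section Energy

variable {𝓗 : Type*} [NormedAddCommGroup 𝓗] [InnerProductSpace ℝ 𝓗]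
  (K : Submodule ℝ 𝓗) [K.HasOrthogonalProjection] {E : 𝓗 → ℝ}

lemma apply_starProjection_eq (hinv : ∀ X : 𝓗, ∀ Y ∈ Kᗮ, E (X + Y) = E X) (X : 𝓗) :
    E (K.starProjection X) = E X := by
  simpa using (hinv (K.starProjection X) _ (K.sub_starProjection_mem_orthogonal X)).symm

lemma infDist_sublevel_le (hhom : ∀ c : ℝ, 0 ≤ c → ∀ X : 𝓗, E (c • X) = c ^ 2 * E X)
    (hinv : ∀ X : 𝓗, ∀ Y ∈ Kᗮ, E (X + Y) = E X) {E₀ : ℝ} (hE₀ : 0 ≤ E₀) {X : 𝓗}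
    (hX : E₀ ≤ E X) :
    infDist X {Z | E Z ≤ E₀} ≤ (1 - √(E₀ / E X)) * ‖K.starProjection X‖ := by
  set P := K.starProjection X
  set t := √(E₀ / E X)
  have ht1 : t ≤ 1 := Real.sqrt_le_one.mpr (div_le_one_of_le₀ hX (hE₀.trans hX))
  have hZ : E (t • P + (X - P)) ≤ E₀ := by
    rw [hinv _ _ (K.sub_starProjection_mem_orthogonal X), hhom t (Real.sqrt_nonneg _),
      apply_starProjection_eq K hinv, Real.sq_sqrt (div_nonneg hE₀ (hE₀.trans hX)),
      div_mul_cancel_of_imp fun h => by linarith]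
  calc infDist X {Z | E Z ≤ E₀} ≤ ‖X - (t • P + (X - P))‖ :=
      dist_eq_norm X _ ▸ infDist_le_dist_of_mem (s := {Z | E Z ≤ E₀}) hZ
    _ = (1 - t) * ‖P‖ := by
      rw [show X - (t • P + (X - P)) = (1 - t) • P by module, norm_smul,
        Real.norm_of_nonneg (sub_nonneg.mpr ht1)]

end Energy

theorem dist_to_energy_sublevel_general
    {𝓗 : Type*} [NormedAddCommGroup 𝓗] [InnerProductSpace ℝ 𝓗] [CompleteSpace 𝓗]
    (K : Submodule ℝ 𝓗) (hK : IsClosed (K : Set 𝓗))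
    (E : 𝓗 → ℝ)
    (hhom : ∀ c : ℝ, 0 ≤ c → ∀ X : 𝓗, E (c • X) = c^2 * E X)
    (M₁ : ℝ) (hM₁ : 0 < M₁) (hlower : ∀ X ∈ K, M₁ * ‖X‖^2 ≤ E X)
    (hinv : ∀ X : 𝓗, ∀ Y ∈ Kᗮ, E (X + Y) = E X) :
    ∀ E₀ : ℝ, 0 ≤ E₀ →
      ({Z : 𝓗 | E Z ≤ E₀}.Nonempty ∧
        ∀ X : 𝓗, (Metric.infDist X {Z : 𝓗 | E Z ≤ E₀})^2 ≤ M₁⁻¹ * max (E X - E₀) 0) := by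
  intro E₀ hE₀
  have : CompleteSpace K := hK.completeSpace_coe
  have hE0 : E 0 = 0 := by simpa using hhom 0 le_rfl 0
  refine ⟨⟨0, show E 0 ≤ E₀ from hE0 ▸ hE₀⟩, fun X => ?_⟩
  rcases le_or_gt (E X) E₀ with hX | hX
  · rw [infDist_zero_of_mem (s := {Z | E Z ≤ E₀}) hX, zero_pow two_ne_zero]
    positivity
  set P := K.starProjection X
  set t := √(E₀ / E X)
  have hP : M₁ * ‖P‖ ^ 2 ≤ E X :=
    apply_starProjection_eq K hinv X ▸ hlower P (K.starProjection_apply_mem X)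
  rw [max_eq_left (by linarith), ← div_eq_inv_mul, le_div_iff₀ hM₁]
  calc infDist X {Z | E Z ≤ E₀} ^ 2 * M₁ ≤ ((1 - t) * ‖P‖) ^ 2 * M₁ := by
        gcongr
        · exact infDist_nonneg
        · exact infDist_sublevel_le K hhom hinv hE₀ hX.le
    _ = (1 - t) ^ 2 * (M₁ * ‖P‖ ^ 2) := by ring
    _ ≤ (1 - t) ^ 2 * E X := by gcongr
    _ ≤ E X - E₀ := sq_one_sub_sqrt_div_mul_le hE₀ hX.le

/-- **Abstract distance estimate to energy sublevel sets** (appendix lemma).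
Let `𝓗` be a real Hilbert space, `K` a closed subspace, and `E : 𝓗 → [0,∞)` a continuous
functional which is 2-homogeneous, bounded below by `M₁‖·‖²` on `K`, and invariant under
addition of elements of `Kᗮ`. Then every sublevel set `B = {E ≤ E₀}` with `E₀ ≥ 0` is nonempty
and `dist(X, B)² ≤ M₁⁻¹ {E(X) − E₀}⁺` for every `X`. -/
theorem dist_to_energy_sublevel
    {𝓗 : Type*} [NormedAddCommGroup 𝓗] [InnerProductSpace ℝ 𝓗] [CompleteSpace 𝓗]
    (K : Submodule ℝ 𝓗) (hK : IsClosed (K : Set 𝓗))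
    (E : 𝓗 → ℝ) (hEnonneg : ∀ X, 0 ≤ E X) (hEcont : Continuous E)
    (hhom : ∀ c : ℝ, 0 ≤ c → ∀ X : 𝓗, E (c • X) = c^2 * E X)
    (M₁ : ℝ) (hM₁ : 0 < M₁) (hlower : ∀ X ∈ K, M₁ * ‖X‖^2 ≤ E X)
    (hinv : ∀ X : 𝓗, ∀ Y ∈ Kᗮ, E (X + Y) = E X) :
    ∀ E₀ : ℝ, 0 ≤ E₀ →
      ({Z : 𝓗 | E Z ≤ E₀}.Nonempty ∧
        ∀ X : 𝓗, (Metric.infDist X {Z : 𝓗 | E Z ≤ E₀})^2 ≤ M₁⁻¹ * max (E X - E₀) 0) :=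
  dist_to_energy_sublevel_general K hK E hhom M₁ hM₁ hlower hinv
end
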